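/- arXiv:2509.21675 — 6 statements merged into one kernel-verified Lean document; each statement's English description precedes it below -/
import Mathlib

section
/- Let N be an orthonormal basis of the null space of a full-row-rank matrix A (i.e., AN = 0, N^T N = I, AA^T ≻ 0), let H be symmetric, and let λ_min = min over unit vectors ξ with Aξ = 0 of ξ^T H ξ. Then for every λ > -λ_min, the KKT system [[H + λI, A^T],[A, 0]] [p; q] = [-g; 0] has a unique solution p(λ) = -N (N^T H N + λI)^{-1} N^T g, and the map λ ↦ ‖p(λ)‖ is monotonically nonincreasing on (-λ_min, ∞). -/
/-!
Write `p = N w`. Multiplying the first KKT equation by `Nᵀ` removes the multiplier (`NᵀAᵀ = 0`)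
and leaves the reduced system `(NᵀHN + λI) w = -Nᵀg`, whose matrix is positive definite for
`λ > -λ_min` because `λ_min` bounds the Rayleigh quotient of `NᵀHN` from below. A multiplier `q`
exists because the residual `-g - (H + λI) p` is orthogonal to `range N = ker A`, hence lies in
`range Aᵀ`, and it is unique because `AAᵀ` is invertible.

Since `N` is an isometry, `‖p(λ)‖ = ‖(B + λI)⁻¹ c‖` with `B = NᵀHN`, `c = Nᵀg`. For `λ₁ ≤ λ₂`
the resolvent identities `w₁ - w₂ = (λ₂ - λ₁)(B + λ₂I)⁻¹ w₁ = (λ₂ - λ₁)(B + λ₁I)⁻¹ w₂` write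
`‖w₁‖² - ‖w₂‖² = ⟪w₁ - w₂, w₁⟫ + ⟪w₂, w₁ - w₂⟫` as a sum of two nonnegative quadratic forms.
-/

open Matrix

namespace Matrix

section Isometry

variable {R : Type*} [CommRing R] {n k : Type*} [Fintype n] [Fintype k] [DecidableEq k]
  {N : Matrix n k R}

lemma transpose_mulVec_mulVec_of_transpose_mul_self (hN : Nᵀ * N = 1) (u : k → R) :
    Nᵀ *ᵥ (N *ᵥ u) = u := by
  rw [mulVec_mulVec, hN, one_mulVec]

lemma dotProduct_mulVec_self_of_transpose_mul_self (hN : Nᵀ * N = 1) (u : k → R) :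
    (N *ᵥ u) ⬝ᵥ (N *ᵥ u) = u ⬝ᵥ u := by
  rw [dotProduct_mulVec, ← mulVec_transpose, transpose_mulVec_mulVec_of_transpose_mul_self hN]

end Isometry

section Inverse

variable {K : Type*} [Field K] {k : Type*} [Fintype k] [DecidableEq k] {B : Matrix k k K}

lemma mulVec_nonsing_inv_mulVec (hB : IsUnit B.det) (c : k → K) : B *ᵥ (B⁻¹ *ᵥ c) = c := by
  rw [mulVec_mulVec, mul_nonsing_inv B hB, one_mulVec]

lemma eq_nonsing_inv_mulVec_of_mulVec_eq (hB : IsUnit B.det) {w c : k → K} (h : B *ᵥ w = c) :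
    w = B⁻¹ *ᵥ c := by
  rw [← h, mulVec_mulVec, nonsing_inv_mul B hB, one_mulVec]

end Inverse

section Rayleigh

variable {m n k : Type*} [Fintype n] [Fintype k]

lemma mul_dotProduct_self_le_of_forall_unit {A : Matrix m n ℝ} {H : Matrix n n ℝ} {μ : ℝ}
    (h : ∀ ξ, A *ᵥ ξ = 0 → ξ ⬝ᵥ ξ = 1 → μ ≤ ξ ⬝ᵥ (H *ᵥ ξ)) {ξ : n → ℝ} (hξ : A *ᵥ ξ = 0) :
    μ * (ξ ⬝ᵥ ξ) ≤ ξ ⬝ᵥ (H *ᵥ ξ) := by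
  rcases eq_or_ne ξ 0 with rfl | hne
  · simp
  have hs : 0 < ξ ⬝ᵥ ξ := dotProduct_self_star_pos_iff.mpr hne
  set t := Real.sqrt (ξ ⬝ᵥ ξ)
  have ht : t ^ 2 = ξ ⬝ᵥ ξ := Real.sq_sqrt hs.le
  have ht0 : t ≠ 0 := (Real.sqrt_pos.2 hs).ne'
  have hu := h (t⁻¹ • ξ) (by rw [mulVec_smul, hξ, smul_zero]) (by
    rw [smul_dotProduct, dotProduct_smul, smul_eq_mul, smul_eq_mul, ← ht]
    field_simp)
  rw [mulVec_smul, smul_dotProduct, dotProduct_smul, smul_eq_mul, smul_eq_mul,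
    ← mul_assoc, ← sq, inv_pow, ht] at hu
  rwa [le_inv_mul_iff₀ hs, mul_comm] at hu

lemma mul_dotProduct_self_le_compression [DecidableEq k] {A : Matrix m n ℝ} {H : Matrix n n ℝ}
    {N : Matrix n k ℝ} {μ : ℝ} (hAN : A * N = 0) (hNN : Nᵀ * N = 1)
    (h : ∀ ξ, A *ᵥ ξ = 0 → ξ ⬝ᵥ ξ = 1 → μ ≤ ξ ⬝ᵥ (H *ᵥ ξ)) (u : k → ℝ) :
    μ * (u ⬝ᵥ u) ≤ u ⬝ᵥ ((Nᵀ * H * N) *ᵥ u) := by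
  have hNu : A *ᵥ (N *ᵥ u) = 0 := by rw [mulVec_mulVec, hAN, zero_mulVec]
  calc μ * (u ⬝ᵥ u) = μ * ((N *ᵥ u) ⬝ᵥ (N *ᵥ u)) := by
        rw [dotProduct_mulVec_self_of_transpose_mul_self hNN]
    _ ≤ (N *ᵥ u) ⬝ᵥ (H *ᵥ (N *ᵥ u)) := mul_dotProduct_self_le_of_forall_unit h hNu
    _ = u ⬝ᵥ ((Nᵀ * H * N) *ᵥ u) := by
        rw [← mulVec_mulVec, ← mulVec_mulVec, dotProduct_transpose_mulVec, dotProduct_comm]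

lemma posDef_add_smul_one {B : Matrix k k ℝ} [DecidableEq k] (hB : Bᵀ = B) {μ lam : ℝ}
    (hμ : ∀ u, μ * (u ⬝ᵥ u) ≤ u ⬝ᵥ (B *ᵥ u)) (hlam : -μ < lam) : (B + lam • 1).PosDef := by
  refine posDef_iff_dotProduct_mulVec.2 ⟨?_, fun u hu => ?_⟩
  · simp [IsHermitian, hB]
  have hs : 0 < u ⬝ᵥ u := dotProduct_self_star_pos_iff.mpr hu
  rw [star_trivial, add_mulVec, smul_mulVec, one_mulVec, dotProduct_add, dotProduct_smul,
    smul_eq_mul]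
  nlinarith [hμ u]

end Rayleigh

section Monotone

variable {k : Type*} [Fintype k] [DecidableEq k]

lemma inv_add_smul_one_mulVec_sub {K : Type*} [Field K] {B : Matrix k k K} {l₁ l₂ : K}
    (h₁ : IsUnit (B + l₁ • 1).det) (h₂ : IsUnit (B + l₂ • 1).det) (c : k → K) :
    (B + l₁ • 1)⁻¹ *ᵥ c - (B + l₂ • 1)⁻¹ *ᵥ c =
      (l₂ - l₁) • ((B + l₂ • 1)⁻¹ *ᵥ ((B + l₁ • 1)⁻¹ *ᵥ c)) := by
  rw [← mulVec_smul]
  refine eq_nonsing_inv_mulVec_of_mulVec_eq h₂ ?_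
  have hB (x : k → K) : (B + l₂ • 1) *ᵥ x = (B + l₁ • 1) *ᵥ x + (l₂ - l₁) • x := by
    simp only [add_mulVec, smul_mulVec, one_mulVec, sub_smul]; abel
  rw [mulVec_sub, hB, mulVec_nonsing_inv_mulVec h₁, mulVec_nonsing_inv_mulVec h₂]
  abel

lemma dotProduct_self_inv_add_smul_one_mulVec_antitone {B : Matrix k k ℝ} {l₁ l₂ : ℝ}
    (h₁ : (B + l₁ • 1).PosDef) (h₁₂ : l₁ ≤ l₂) (c : k → ℝ) :
    ((B + l₂ • 1)⁻¹ *ᵥ c) ⬝ᵥ ((B + l₂ • 1)⁻¹ *ᵥ c) ≤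
      ((B + l₁ • 1)⁻¹ *ᵥ c) ⬝ᵥ ((B + l₁ • 1)⁻¹ *ᵥ c) := by
  have hd : 0 ≤ l₂ - l₁ := sub_nonneg.2 h₁₂
  have h₂ : (B + l₂ • 1).PosDef := by
    have : B + l₂ • 1 = B + l₁ • 1 + (l₂ - l₁) • 1 := by rw [sub_smul]; abel
    rw [this]
    exact h₁.add_posSemidef (PosSemidef.one.smul hd)
  have hdet₁ := (isUnit_iff_isUnit_det _).1 h₁.isUnit
  have hdet₂ := (isUnit_iff_isUnit_det _).1 h₂.isUnit
  set w₁ := (B + l₁ • 1)⁻¹ *ᵥ c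
  set w₂ := (B + l₂ • 1)⁻¹ *ᵥ c
  have q₁ : 0 ≤ w₁ ⬝ᵥ ((B + l₂ • 1)⁻¹ *ᵥ w₁) := by
    simpa using h₂.inv.posSemidef.dotProduct_mulVec_nonneg w₁
  have q₂ : 0 ≤ w₂ ⬝ᵥ ((B + l₁ • 1)⁻¹ *ᵥ w₂) := by
    simpa using h₁.inv.posSemidef.dotProduct_mulVec_nonneg w₂
  have t₁ : (w₁ - w₂) ⬝ᵥ w₁ = (l₂ - l₁) * (w₁ ⬝ᵥ ((B + l₂ • 1)⁻¹ *ᵥ w₁)) := by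
    rw [inv_add_smul_one_mulVec_sub hdet₁ hdet₂, smul_dotProduct, smul_eq_mul, dotProduct_comm]
  have t₂ : w₂ ⬝ᵥ (w₂ - w₁) = (l₁ - l₂) * (w₂ ⬝ᵥ ((B + l₁ • 1)⁻¹ *ᵥ w₂)) := by
    rw [inv_add_smul_one_mulVec_sub hdet₂ hdet₁, dotProduct_smul, smul_eq_mul]
  have : w₁ ⬝ᵥ w₁ - w₂ ⬝ᵥ w₂ = (w₁ - w₂) ⬝ᵥ w₁ - w₂ ⬝ᵥ (w₂ - w₁) := by
    rw [sub_dotProduct, dotProduct_sub]; ring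
  nlinarith [mul_nonneg hd q₁, mul_nonneg hd q₂]

end Monotone

section KKT

variable {K : Type*} [Field K] {m n k : Type*} [Fintype m] [Fintype n] [Fintype k]
  {A : Matrix m n K} {N : Matrix n k K}

lemma transpose_mulVec_injective [DecidableEq m] (hA : IsUnit (A * Aᵀ)) :
    Function.Injective Aᵀ.mulVec := by
  have : Function.Injective (A * Aᵀ).mulVec := mulVec_injective_iff_isUnit.2 hA
  exact fun x y hxy => this (by rw [← mulVec_mulVec, ← mulVec_mulVec, hxy])

variable [DecidableEq k] {M : Matrix n n K} {g : n → K}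

lemma kkt_fst_eq (hAN : A * N = 0) (hrange : ∀ ξ, A *ᵥ ξ = 0 → ∃ w, ξ = N *ᵥ w)
    (hM : IsUnit (Nᵀ * M * N).det) {p : n → K} {q : m → K}
    (h₁ : M *ᵥ p + Aᵀ *ᵥ q = -g) (h₂ : A *ᵥ p = 0) :
    p = -((N * (Nᵀ * M * N)⁻¹ * Nᵀ) *ᵥ g) := by
  obtain ⟨w, rfl⟩ := hrange p h₂
  have hw : (Nᵀ * M * N) *ᵥ w = -(Nᵀ *ᵥ g) := by
    have := congrArg (Nᵀ *ᵥ ·) h₁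
    simpa [mulVec_add, mulVec_mulVec, ← transpose_mul, hAN, Matrix.mul_assoc, mulVec_neg]
      using this
  rw [eq_nonsing_inv_mulVec_of_mulVec_eq hM hw]
  simp only [mulVec_neg, mulVec_mulVec, Matrix.mul_assoc]

lemma exists_transpose_mulVec_eq [DecidableEq m] (hA : IsUnit (A * Aᵀ)) (hAN : A * N = 0)
    (hNN : Nᵀ * N = 1) (hrange : ∀ ξ, A *ᵥ ξ = 0 → ∃ w, ξ = N *ᵥ w) {v : n → K}
    (hv : Nᵀ *ᵥ v = 0) : ∃ q, Aᵀ *ᵥ q = v := by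
  obtain ⟨q, hq⟩ := mulVec_surjective_iff_isUnit.2 hA (A *ᵥ v)
  refine ⟨q, ?_⟩
  obtain ⟨u, hu⟩ := hrange (v - Aᵀ *ᵥ q) (by rw [mulVec_sub, mulVec_mulVec, hq, sub_self])
  have : Nᵀ *ᵥ (v - Aᵀ *ᵥ q) = 0 := by
    rw [mulVec_sub, hv, mulVec_mulVec, ← transpose_mul, hAN, transpose_zero, zero_mulVec,
      sub_zero]
  rw [hu, transpose_mulVec_mulVec_of_transpose_mul_self hNN] at this
  rw [this, mulVec_zero, sub_eq_zero] at hu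
  exact hu.symm

lemma existsUnique_kkt [DecidableEq m] (hA : IsUnit (A * Aᵀ)) (hAN : A * N = 0)
    (hNN : Nᵀ * N = 1) (hrange : ∀ ξ, A *ᵥ ξ = 0 → ∃ w, ξ = N *ᵥ w)
    (hM : IsUnit (Nᵀ * M * N).det) :
    ∃! pq : (n → K) × (m → K), M *ᵥ pq.1 + Aᵀ *ᵥ pq.2 = -g ∧ A *ᵥ pq.1 = 0 := by
  set w := -((Nᵀ * M * N)⁻¹ *ᵥ (Nᵀ *ᵥ g))
  set p := N *ᵥ w
  have hAp : A *ᵥ p = 0 := by rw [mulVec_mulVec, hAN, zero_mulVec]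
  have hw : (Nᵀ * M * N) *ᵥ w = -(Nᵀ *ᵥ g) := by
    rw [mulVec_neg, mulVec_nonsing_inv_mulVec hM]
  have hv : Nᵀ *ᵥ (-g - M *ᵥ p) = 0 := by
    rw [mulVec_sub, mulVec_mulVec, mulVec_mulVec, hw, mulVec_neg, sub_neg_eq_add,
      neg_add_cancel]
  obtain ⟨q, hq⟩ := exists_transpose_mulVec_eq hA hAN hNN hrange hv
  refine ⟨(p, q), ⟨by rw [hq]; abel, hAp⟩, ?_⟩
  rintro ⟨p', q'⟩ ⟨h₁, h₂⟩
  dsimp only at h₁ h₂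
  obtain rfl : p' = p := by
    rw [kkt_fst_eq hAN hrange hM h₁ h₂]
    simp only [p, w, mulVec_neg, mulVec_mulVec, Matrix.mul_assoc]
  refine Prod.ext rfl (transpose_mulVec_injective hA ?_)
  rw [hq, ← h₁]
  abel

end KKT

end Matrix

/-- Newton subproblem: for `λ > -λ_min` the KKT system has a unique solution with
`p(λ) = -N(NᵀHN + λI)⁻¹Nᵀg`, and `‖p(λ)‖` is monotonically nonincreasing. -/
theorem stmt_0 (n m k : ℕ)
    (A : Matrix (Fin m) (Fin n) ℝ) (H : Matrix (Fin n) (Fin n) ℝ)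
    (N : Matrix (Fin n) (Fin k) ℝ) (g : Fin n → ℝ)
    (hH : Hᵀ = H)
    (hfull : (A * Aᵀ).PosDef)
    (hAN : A * N = 0) (hNN : Nᵀ * N = 1)
    (hrange : ∀ ξ : Fin n → ℝ, A.mulVec ξ = 0 ↔ ∃ w : Fin k → ℝ, ξ = N.mulVec w)
    (lammin : ℝ)
    (hmin : IsLeast {t : ℝ | ∃ ξ : Fin n → ℝ, A.mulVec ξ = 0 ∧ ξ ⬝ᵥ ξ = 1 ∧
      t = ξ ⬝ᵥ H.mulVec ξ} lammin)
    (p : ℝ → (Fin n → ℝ))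
    (hp : ∀ lam : ℝ, p lam = -(N * (Nᵀ * H * N + lam • (1 : Matrix (Fin k) (Fin k) ℝ))⁻¹
      * Nᵀ).mulVec g) :
    (∀ lam : ℝ, -lammin < lam →
      (∃! pq : (Fin n → ℝ) × (Fin m → ℝ),
        (H + lam • (1 : Matrix (Fin n) (Fin n) ℝ)).mulVec pq.1 + Aᵀ.mulVec pq.2 = -g ∧
        A.mulVec pq.1 = 0) ∧
      (∀ pq : (Fin n → ℝ) × (Fin m → ℝ),
        (H + lam • (1 : Matrix (Fin n) (Fin n) ℝ)).mulVec pq.1 + Aᵀ.mulVec pq.2 = -g →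
        A.mulVec pq.1 = 0 → pq.1 = p lam)) ∧
    (∀ lam₁ lam₂ : ℝ, -lammin < lam₁ → lam₁ ≤ lam₂ →
      Real.sqrt (p lam₂ ⬝ᵥ p lam₂) ≤ Real.sqrt (p lam₁ ⬝ᵥ p lam₁)) := by
  have hnull : ∀ ξ, A *ᵥ ξ = 0 → ∃ w, ξ = N *ᵥ w := fun ξ => (hrange ξ).1
  set B := Nᵀ * H * N
  have hB : Bᵀ = B := by simp only [B, transpose_mul, transpose_transpose, hH, Matrix.mul_assoc]
  have hBμ : ∀ u, lammin * (u ⬝ᵥ u) ≤ u ⬝ᵥ (B *ᵥ u) :=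
    mul_dotProduct_self_le_compression hAN hNN fun ξ h₁ h₂ => hmin.2 ⟨ξ, h₁, h₂, rfl⟩
  have hred (lam : ℝ) : Nᵀ * (H + lam • 1) * N = B + lam • 1 := by
    simp only [B, Matrix.mul_add, Matrix.add_mul, Matrix.mul_smul, Matrix.smul_mul,
      Matrix.mul_one, hNN]
  have hPD (lam : ℝ) (hlam : -lammin < lam) : (B + lam • 1).PosDef :=
    posDef_add_smul_one hB hBμ hlam
  have hdet (lam : ℝ) (hlam : -lammin < lam) : IsUnit (Nᵀ * (H + lam • 1) * N).det := by
    rw [hred, ← isUnit_iff_isUnit_det]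
    exact (hPD lam hlam).isUnit
  have hnorm (lam : ℝ) :
      p lam ⬝ᵥ p lam = ((B + lam • 1)⁻¹ *ᵥ (Nᵀ *ᵥ g)) ⬝ᵥ ((B + lam • 1)⁻¹ *ᵥ (Nᵀ *ᵥ g)) := by
    rw [hp, neg_dotProduct_neg, ← mulVec_mulVec, ← mulVec_mulVec,
      dotProduct_mulVec_self_of_transpose_mul_self hNN]
  refine ⟨fun lam hlam => ⟨?_, fun pq h₁ h₂ => ?_⟩, fun lam₁ lam₂ h₁ h₁₂ => ?_⟩
  · exact existsUnique_kkt hfull.isUnit hAN hNN hnull (hdet lam hlam)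
  · rw [hp, ← hred]
    exact kkt_fst_eq hAN hnull (hdet lam hlam) h₁ h₂
  · rw [hnorm, hnorm]
    exact Real.sqrt_le_sqrt (dotProduct_self_inv_add_smul_one_mulVec_antitone (hPD lam₁ h₁) h₁₂ _)
end

section
/- Define M = {U ∈ R^{n×r} : U U^T 1_n = 1_n, tr(U U^T) = K}, V = {V ∈ R^{n×(r-1)} : 1_n^T V = 0, tr(V V^T) = K - 1}, O(r) = {Q ∈ R^{r×r} : Q Q^T = I_r}, and φ(V,Q) = [n^{-1/2} 1_n, V] Q. Then M = φ(V × O(r)), i.e., every U ∈ M can be written as φ(V,Q) for some (V,Q) ∈ V × O(r), and conversely every such φ(V,Q) lies in M. -/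
open Matrix

/-!
With `A = [n^{-1/2} 1, V]` and `Q` orthogonal, `(A Q)(A Q)ᵀ = A Aᵀ = n⁻¹ 1 1ᵀ + V Vᵀ`, so both
defining conditions of `M` reduce to `Vᵀ 1 = 0` and `tr (V Vᵀ) = K - 1`. Conversely, if
`U Uᵀ 1 = 1`, then `y = Uᵀ 1` satisfies `U y = 1` and `‖y‖² = n`; completing `y / √n` to an
orthogonal matrix `Q` with first row `y / √n` makes the first column of `U Qᵀ` constant
`n^{-1/2}`, and the remaining columns `V` satisfy `Vᵀ 1 = Q_{≥1} y = 0` by orthonormality.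
-/

theorem Matrix.mul_mul_transpose_of_mul_transpose_eq_one {m k R : Type*} [Fintype k]
    [DecidableEq k] [CommSemiring R] (A : Matrix m k R) {Q : Matrix k k R} (hQ : Q * Qᵀ = 1) :
    A * Q * (A * Q)ᵀ = A * Aᵀ := by
  rw [transpose_mul, Matrix.mul_assoc, ← Matrix.mul_assoc Q, hQ, Matrix.one_mul]

theorem Matrix.cons_mul_transpose_cons {m R : Type*} [Semiring R] {r : ℕ} (a : m → R)
    (V : Matrix m (Fin r) R) :
    (of fun i => Fin.cons (a i) fun j => V i j : Matrix m (Fin (r + 1)) R) *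
        (of fun i => Fin.cons (a i) fun j => V i j : Matrix m (Fin (r + 1)) R)ᵀ =
      vecMulVec a a + V * Vᵀ := by
  ext i k
  simp [mul_apply, Fin.sum_univ_succ, vecMulVec_apply]

theorem Matrix.exists_mul_transpose_eq_one_row_eq {ι : Type*} [Fintype ι] [DecidableEq ι]
    (i : ι) (x : ι → ℝ) (hx : x ⬝ᵥ x = 1) :
    ∃ Q : Matrix ι ι ℝ, Q * Qᵀ = 1 ∧ Q i = x := by
  have hunit : Orthonormal ℝ (({i} : Set ι).domRestrict fun _ => WithLp.toLp 2 x) := by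
    have : Subsingleton ({i} : Set ι) := Set.subsingleton_singleton.coe_sort
    rw [orthonormal_subsingleton_iff]
    intro _
    rw [Set.domRestrict_apply, EuclideanSpace.norm_eq, Real.sqrt_eq_one, ← hx]
    simp [dotProduct, sq]
  obtain ⟨b, hb⟩ := hunit.exists_orthonormalBasis_extension_of_card_eq (by simp)
  set M := (EuclideanSpace.basisFun ι ℝ).toBasis.toMatrix b
  refine ⟨Mᵀ, ?_, ?_⟩
  · simpa [conjTranspose_eq_transpose_of_trivial] using
      (EuclideanSpace.basisFun ι ℝ).toMatrix_orthonormalBasis_conjTranspose_mul_self b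
  · ext j
    simp [M, Module.Basis.toMatrix_apply, hb i rfl]

theorem Matrix.dotProduct_const_inv_sqrt_card {n : ℕ} (hn : 0 < n) :
    (fun _ : Fin n => (√n)⁻¹ : Fin n → ℝ) ⬝ᵥ (fun _ => (√n)⁻¹) = 1 := by
  rw [dotProduct, Finset.sum_const, Finset.card_univ, Fintype.card_fin, nsmul_eq_mul, ← mul_inv,
    Real.mul_self_sqrt n.cast_nonneg, mul_inv_cancel₀ (by positivity)]

theorem exists_cons_mul_eq_of_mul_transpose_mulVec_eq {n r : ℕ} (hn : 0 < n)
    (U : Matrix (Fin n) (Fin (r + 1)) ℝ) (hU : (U * Uᵀ) *ᵥ (fun _ => 1) = fun _ => 1) :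
    ∃ (V : Matrix (Fin n) (Fin r) ℝ) (Q : Matrix (Fin (r + 1)) (Fin (r + 1)) ℝ),
      (fun _ => 1) ᵥ* V = 0 ∧ Q * Qᵀ = 1 ∧
        (of fun i => Fin.cons (√n)⁻¹ fun j => V i j) * Q = U := by
  have hsqrt : √n ≠ (0 : ℝ) := by positivity
  set y := (fun _ => (1 : ℝ)) ᵥ* U
  have hUy : U *ᵥ y = fun _ => 1 := by
    rw [← hU, ← mulVec_mulVec, mulVec_transpose]
  have hyy : y ⬝ᵥ y = n := by
    rw [← dotProduct_mulVec, hUy]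
    simp [dotProduct]
  obtain ⟨Q, hQ, hQ0⟩ := exists_mul_transpose_eq_one_row_eq 0 ((√n)⁻¹ • y) (by
    rw [smul_dotProduct, dotProduct_smul, hyy, smul_smul, smul_eq_mul, ← mul_inv,
      Real.mul_self_sqrt n.cast_nonneg, inv_mul_cancel₀ (by positivity)])
  set W := U * Qᵀ
  refine ⟨of fun i j => W i j.succ, Q, ?_, hQ, ?_⟩
  · ext j
    have hy : y = √n • Q 0 := by rw [hQ0, smul_smul, mul_inv_cancel₀ hsqrt, one_smul]
    change ((fun _ => 1) ᵥ* W) j.succ = 0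
    rw [← vecMul_vecMul, vecMul_transpose, show (fun _ => 1) ᵥ* U = y from rfl, hy, mulVec_smul]
    change √n * (Q * Qᵀ) j.succ 0 = 0
    simp [hQ]
  · calc _ = W * Q := by
          congr 1
          ext i j
          cases j using Fin.cases with
          | zero =>
            change (√n)⁻¹ = (U *ᵥ Q 0) i
            simp [hQ0, mulVec_smul, hUy]
          | succ j => rfl
      _ = U := by rw [Matrix.mul_assoc, mul_eq_one_comm.mp hQ, Matrix.mul_one]

theorem stmt_2_general (n r K : ℕ) (hn : 0 < n) :
    {U : Matrix (Fin n) (Fin (r + 1)) ℝ |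
        (U * Uᵀ).mulVec (fun _ => (1 : ℝ)) = (fun _ => (1 : ℝ)) ∧
        (U * Uᵀ).trace = (K : ℝ)} =
      (fun p : Matrix (Fin n) (Fin r) ℝ × Matrix (Fin (r + 1)) (Fin (r + 1)) ℝ =>
          (Matrix.of fun i => Fin.cons ((Real.sqrt n)⁻¹) (fun j => p.1 i j)) * p.2) ''
        {p : Matrix (Fin n) (Fin r) ℝ × Matrix (Fin (r + 1)) (Fin (r + 1)) ℝ |
          (fun _ => (1 : ℝ)) ᵥ* p.1 = 0 ∧
          (p.1 * p.1ᵀ).trace = (K : ℝ) - 1 ∧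
          p.2 * p.2ᵀ = 1} := by
  have hc := dotProduct_const_inv_sqrt_card hn
  ext U
  constructor
  · rintro ⟨hU1, hUK⟩
    obtain ⟨V, Q, hV, hQ, rfl⟩ := exists_cons_mul_eq_of_mul_transpose_mulVec_eq hn U hU1
    refine ⟨(V, Q), ⟨hV, ?_, hQ⟩, rfl⟩
    rw [mul_mul_transpose_of_mul_transpose_eq_one _ hQ, cons_mul_transpose_cons, trace_add,
      trace_vecMulVec, hc] at hUK
    linarith
  · rintro ⟨⟨V, Q⟩, ⟨hV, hVK, hQ⟩, rfl⟩
    rw [Set.mem_ofPred_eq, mul_mul_transpose_of_mul_transpose_eq_one _ hQ,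
      cons_mul_transpose_cons, add_mulVec, ← mulVec_mulVec, mulVec_transpose, hV, mulVec_zero,
      add_zero, trace_add, trace_vecMulVec, hc, hVK]
    refine ⟨?_, by ring⟩
    ext i
    simpa [mulVec, dotProduct, vecMulVec_apply] using hc

/-- The K-means manifold `M` equals the image `φ(V × O(r))` of the product manifold,
where `φ(V,Q) = [n^{-1/2} 1ₙ, V] Q`.  Here the search rank is written as `r + 1 ≥ 1`. -/
theorem stmt_2 (n r K : ℕ) (hn : 0 < n) (hK : 1 ≤ K) :
    {U : Matrix (Fin n) (Fin (r + 1)) ℝ |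
        (U * Uᵀ).mulVec (fun _ => (1 : ℝ)) = (fun _ => (1 : ℝ)) ∧
        (U * Uᵀ).trace = (K : ℝ)} =
      (fun p : Matrix (Fin n) (Fin r) ℝ × Matrix (Fin (r + 1)) (Fin (r + 1)) ℝ =>
          (Matrix.of fun i => Fin.cons ((Real.sqrt n)⁻¹) (fun j => p.1 i j)) * p.2) ''
        {p : Matrix (Fin n) (Fin r) ℝ × Matrix (Fin (r + 1)) (Fin (r + 1)) ℝ |
          (fun _ => (1 : ℝ)) ᵥ* p.1 = 0 ∧
          (p.1 * p.1ᵀ).trace = (K : ℝ) - 1 ∧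
          p.2 * p.2ᵀ = 1} :=
  stmt_2_general n r K hn
end

section
/- Let M_+ = {U ∈ R^{n×K} : U ≥ 0 entrywise, U U^T 1_n = 1_n, tr(U U^T) = K} and M'_+ = {U ∈ R^{n×K} : U ≥ 0, U U^T 1_n = 1_n, U^T U = I_K}. Then M_+ = M'_+. That is, for entrywise nonnegative U with U U^T 1_n = 1_n, the conditions tr(U U^T) = K and U^T U = I_K are equivalent. -/
open Matrix Finset

/-!
`S = U Uᵀ` is entrywise nonnegative, symmetric and has unit row sums, so it is doubly stochastic
and weighted AM–GM gives `xᵀ S x ≤ xᵀ x`, i.e. `1 - S ⪰ 0`. Conjugating by `U` shows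
`A - A² ⪰ 0` for `A = Uᵀ U`, hence `tr (A²) ≤ tr A`. When `tr A = K` this makes
`tr ((1 - A)ᵀ (1 - A)) = tr (A²) - tr A ≤ 0`, which forces `A = 1`. Conversely
`tr (U Uᵀ) = tr (Uᵀ U) = tr 1 = K`.
-/

namespace Matrix

variable {n m R : Type*} [Fintype n] [DecidableEq n]

lemma dotProduct_mulVec_le_dotProduct_self_of_mem_doublyStochastic [Field R] [LinearOrder R]
    [IsStrictOrderedRing R] {M : Matrix n n R} (hM : M ∈ doublyStochastic R n) (x : n → R) :
    x ⬝ᵥ M *ᵥ x ≤ x ⬝ᵥ x := by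
  obtain ⟨hnonneg, hrow, hcol⟩ := mem_doublyStochastic_iff_sum.mp hM
  have amgm : ∀ i j, x i * (M i j * x j) ≤ (M i j * x i ^ 2 + M i j * x j ^ 2) / 2 := by
    intro i j
    nlinarith [mul_nonneg (hnonneg i j) (sq_nonneg (x i - x j))]
  calc x ⬝ᵥ M *ᵥ x = ∑ i, ∑ j, x i * (M i j * x j) := by
        simp only [dotProduct, mulVec, mul_sum]
    _ ≤ ∑ i, ∑ j, (M i j * x i ^ 2 + M i j * x j ^ 2) / 2 :=
        sum_le_sum fun i _ => sum_le_sum fun j _ => amgm i j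
    _ = (∑ i, (∑ j, M i j) * x i ^ 2 + ∑ j, (∑ i, M i j) * x j ^ 2) / 2 := by
        simp only [← sum_div, sum_add_distrib, sum_mul]
        rw [sum_comm (f := fun i j => M i j * x j ^ 2)]
    _ = x ⬝ᵥ x := by
        simp only [hrow, hcol, one_mul, dotProduct, ← sq]
        ring

lemma posSemidef_one_sub_of_mem_doublyStochastic [Field R] [LinearOrder R]
    [IsStrictOrderedRing R] [StarRing R] [TrivialStar R] {M : Matrix n n R} (hsymm : M.IsSymm)
    (hM : M ∈ doublyStochastic R n) : (1 - M).PosSemidef := by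
  refine posSemidef_iff_dotProduct_mulVec.mpr ⟨?_, fun x => ?_⟩
  · rw [IsHermitian, conjTranspose_eq_transpose_of_trivial, transpose_sub, transpose_one, hsymm]
  · rw [star_trivial, sub_mulVec, one_mulVec, dotProduct_sub, sub_nonneg]
    exact dotProduct_mulVec_le_dotProduct_self_of_mem_doublyStochastic hM x

lemma mul_transpose_mem_doublyStochastic [Fintype m] [CommSemiring R] [PartialOrder R]
    [IsOrderedRing R] {U : Matrix n m R} (hU : ∀ i j, 0 ≤ U i j) (h1 : (U * Uᵀ) *ᵥ 1 = 1) :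
    U * Uᵀ ∈ doublyStochastic R n := by
  refine mem_doublyStochastic.mpr ⟨fun i j => ?_, h1, ?_⟩
  · exact sum_nonneg fun k _ => mul_nonneg (hU i k) (hU j k)
  · rw [← mulVec_transpose, transpose_mul, transpose_transpose, h1]

lemma PosSemidef.trace_conjTranspose_mul_self_sq_le [Fintype m] [Ring R] [PartialOrder R]
    [StarRing R] [AddLeftMono R] {U : Matrix n m R} (h : (1 - U * Uᴴ).PosSemidef) :
    (Uᴴ * U * (Uᴴ * U)).trace ≤ (Uᴴ * U).trace := by
  have hconj : Uᴴ * (1 - U * Uᴴ) * U = Uᴴ * U - Uᴴ * U * (Uᴴ * U) := by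
    simp only [Matrix.mul_sub, Matrix.sub_mul, Matrix.mul_one, Matrix.mul_assoc]
  have := (h.conjTranspose_mul_mul_same U).trace_nonneg
  rwa [hconj, trace_sub, sub_nonneg] at this

lemma IsHermitian.eq_one_of_trace_mul_self_le_trace [Ring R] [PartialOrder R]
    [StarRing R] [StarOrderedRing R] [NoZeroDivisors R] {A : Matrix n n R} (hA : A.IsHermitian)
    (htr : A.trace = Fintype.card n) (hsq : (A * A).trace ≤ A.trace) : A = 1 := by
  have hexpand : ((1 - A)ᴴ * (1 - A)).trace = (A * A).trace - A.trace := by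
    rw [conjTranspose_sub, conjTranspose_one, hA.eq]
    simp only [Matrix.sub_mul, Matrix.mul_sub, Matrix.one_mul, Matrix.mul_one, trace_sub,
      trace_one, htr]
    abel
  have hzero : ((1 - A)ᴴ * (1 - A)).trace = 0 :=
    le_antisymm (hexpand ▸ sub_nonpos.mpr hsq) (posSemidef_conjTranspose_mul_self _).trace_nonneg
  exact (sub_eq_zero.mp (trace_conjTranspose_mul_self_eq_zero_iff.mp hzero)).symm

end Matrix

theorem stmt_7_general (n K : ℕ) :
    {U : Matrix (Fin n) (Fin K) ℝ | (∀ i j, 0 ≤ U i j) ∧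
        (U * Uᵀ).mulVec (fun _ => (1 : ℝ)) = (fun _ => (1 : ℝ)) ∧
        (U * Uᵀ).trace = (K : ℝ)} =
      {U : Matrix (Fin n) (Fin K) ℝ | (∀ i j, 0 ≤ U i j) ∧
        (U * Uᵀ).mulVec (fun _ => (1 : ℝ)) = (fun _ => (1 : ℝ)) ∧
        Uᵀ * U = 1} := by
  ext U
  refine and_congr_right fun hU => and_congr_right fun h1 => ⟨fun htr => ?_, fun horth => ?_⟩
  · have hS : U * Uᵀ ∈ doublyStochastic ℝ (Fin n) := mul_transpose_mem_doublyStochastic hU h1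
    have hsymm : (U * Uᵀ).IsSymm := by
      rw [IsSymm, transpose_mul, transpose_transpose]
    have hPSD := posSemidef_one_sub_of_mem_doublyStochastic hsymm hS
    rw [← conjTranspose_eq_transpose_of_trivial] at hPSD htr ⊢
    refine (isHermitian_conjTranspose_mul_self U).eq_one_of_trace_mul_self_le_trace ?_
      hPSD.trace_conjTranspose_mul_self_sq_le
    rw [trace_mul_comm, htr, Fintype.card_fin]
  · rw [trace_mul_comm, horth, trace_one, Fintype.card_fin]

/-- `M₊ = M'₊`: for entrywise nonnegative `U` with `UUᵀ1 = 1`, the conditions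
`tr(UUᵀ) = K` and `UᵀU = I_K` are equivalent. -/
theorem stmt_7 (n K : ℕ) (hK : 1 ≤ K) (hn : K ≤ n) :
    {U : Matrix (Fin n) (Fin K) ℝ | (∀ i j, 0 ≤ U i j) ∧
        (U * Uᵀ).mulVec (fun _ => (1 : ℝ)) = (fun _ => (1 : ℝ)) ∧
        (U * Uᵀ).trace = (K : ℝ)} =
      {U : Matrix (Fin n) (Fin K) ℝ | (∀ i j, 0 ≤ U i j) ∧
        (U * Uᵀ).mulVec (fun _ => (1 : ℝ)) = (fun _ => (1 : ℝ)) ∧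
        Uᵀ * U = 1} :=
  stmt_7_general n K
end

section
/- Let U ∈ R^{n×K} satisfy U ≥ 0 entrywise, U U^T 1_n = 1_n, and U^T U = I_K. Then there exists a partition G_1 ⊔ ⋯ ⊔ G_K = [n] into nonempty sets such that the k-th column of U equals |G_k|^{-1/2} 1_{G_k} (the indicator vector of G_k scaled by |G_k|^{-1/2}). Conversely, for any such partition, the matrix with these columns lies in M_+. -/
/-!
Nonnegative columns that are orthogonal have disjoint supports `G k`. Hence the `i`-th entry of
`U Uᵀ 1 = 1` collapses to `U i k * s k = 1`, where `s k` is the `k`-th column sum and `i ∈ G k`: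
column `k` is constant equal to `(s k)⁻¹` on its support. Summing it gives `s k = |G k| / s k`,
so `s k = √|G k|`.
-/

open Matrix Finset

variable {ι κ : Type*}

section Converse

variable [DecidableEq ι]

noncomputable def normalizedIndicator (G : κ → Finset ι) : Matrix ι κ ℝ :=
  fun i k => if i ∈ G k then (√(#(G k) : ℝ))⁻¹ else 0

theorem normalizedIndicator_nonneg (G : κ → Finset ι) (i : ι) (k : κ) :
    0 ≤ normalizedIndicator G i k := by
  unfold normalizedIndicator
  split_ifs <;> positivity

theorem transpose_normalizedIndicator_mulVec_one [Fintype ι] (G : κ → Finset ι) (k : κ) :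
    ((normalizedIndicator G)ᵀ *ᵥ 1) k = √(#(G k) : ℝ) := by
  simp only [mulVec, dotProduct, transpose_apply, normalizedIndicator, Pi.one_apply, mul_one,
    sum_ite_mem, univ_inter, sum_const, nsmul_eq_mul]
  rw [← div_eq_mul_inv, Real.div_sqrt]

theorem normalizedIndicator_mul_transpose_mulVec_one [Fintype ι] [Fintype κ]
    {G : κ → Finset ι} (hdisj : ∀ k l, k ≠ l → Disjoint (G k) (G l))
    (hcover : ∀ i, ∃ k, i ∈ G k) :
    (normalizedIndicator G * (normalizedIndicator G)ᵀ) *ᵥ 1 = 1 := by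
  ext i
  obtain ⟨k, hik⟩ := hcover i
  rw [← mulVec_mulVec, mulVec, dotProduct, sum_eq_single k]
  · have hs : √(#(G k) : ℝ) ≠ 0 :=
      (Real.sqrt_pos.mpr (by exact_mod_cast card_pos.mpr ⟨i, hik⟩)).ne'
    simp [normalizedIndicator, hik, transpose_normalizedIndicator_mulVec_one, hs]
  · intro l _ hlk
    simp [normalizedIndicator, disjoint_left.mp (hdisj k l hlk.symm) hik]
  · simp

theorem transpose_normalizedIndicator_mul_self [Fintype ι] [DecidableEq κ]
    {G : κ → Finset ι} (hdisj : ∀ k l, k ≠ l → Disjoint (G k) (G l))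
    (hne : ∀ k, (G k).Nonempty) :
    (normalizedIndicator G)ᵀ * normalizedIndicator G = 1 := by
  ext k l
  simp only [mul_apply, transpose_apply, normalizedIndicator]
  obtain rfl | hkl := eq_or_ne k l
  · have hc : (0 : ℝ) < #(G k) := by exact_mod_cast (hne k).card_pos
    rw [one_apply_eq]
    simp [← mul_inv, Real.mul_self_sqrt hc.le, hc.ne']
  · rw [one_apply_ne hkl]
    refine sum_eq_zero fun i _ => ?_
    by_cases hik : i ∈ G k
    · simp [disjoint_left.mp (hdisj k l hkl) hik]
    · simp [hik]

end Converse

section Forward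

variable [Fintype ι] {U : Matrix ι κ ℝ}

noncomputable def colSupport (U : Matrix ι κ ℝ) (k : κ) : Finset ι :=
  {i | U i k ≠ 0}

theorem mem_colSupport {i : ι} {k : κ} : i ∈ colSupport U k ↔ U i k ≠ 0 := by
  simp [colSupport]

theorem mul_eq_zero_of_transpose_mul_self_eq_one [DecidableEq κ] (hU : ∀ i k, 0 ≤ U i k)
    (h : Uᵀ * U = 1) {k l : κ} (hkl : k ≠ l) (i : ι) : U i k * U i l = 0 := by
  have hsum : ∑ j, U j k * U j l = 0 := by
    simpa [mul_apply, one_apply_ne hkl] using congrFun₂ h k l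
  exact (sum_eq_zero_iff_of_nonneg fun j _ => mul_nonneg (hU j k) (hU j l)).mp hsum i (mem_univ i)

theorem disjoint_colSupport [DecidableEq κ] (hU : ∀ i k, 0 ≤ U i k) (h : Uᵀ * U = 1)
    {k l : κ} (hkl : k ≠ l) : Disjoint (colSupport U k) (colSupport U l) :=
  disjoint_left.mpr fun i hik hil =>
    mul_ne_zero (mem_colSupport.mp hik) (mem_colSupport.mp hil)
      (mul_eq_zero_of_transpose_mul_self_eq_one hU h hkl i)

theorem colSupport_nonempty [DecidableEq κ] (h : Uᵀ * U = 1) (k : κ) :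
    (colSupport U k).Nonempty := by
  by_contra hk
  have hzero : ∀ i, U i k = 0 := fun i => by
    by_contra hik
    exact hk ⟨i, mem_colSupport.mpr hik⟩
  simpa [mul_apply, hzero] using congrFun₂ h k k

variable [Fintype κ]

theorem mul_transpose_mulVec_one_apply (i : ι) :
    ((U * Uᵀ) *ᵥ 1) i = ∑ l, U i l * ∑ j, U j l := by
  rw [← mulVec_mulVec]
  simp [mulVec, dotProduct]

theorem exists_mem_colSupport (hrow : (U * Uᵀ) *ᵥ 1 = 1) (i : ι) : ∃ k, i ∈ colSupport U k := by
  by_contra hi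
  have hzero : ∀ k, U i k = 0 := fun k => by
    by_contra hik
    exact hi ⟨k, mem_colSupport.mpr hik⟩
  simpa [mul_transpose_mulVec_one_apply, hzero] using congrFun hrow i

theorem mul_colSum_eq_one [DecidableEq κ] (hU : ∀ i k, 0 ≤ U i k) (h : Uᵀ * U = 1)
    (hrow : (U * Uᵀ) *ᵥ 1 = 1) {i : ι} {k : κ} (hik : U i k ≠ 0) :
    U i k * ∑ j, U j k = 1 := by
  have hrow_i := congrFun hrow i
  rw [mul_transpose_mulVec_one_apply, Pi.one_apply] at hrow_i
  rwa [sum_eq_single k (fun l _ hlk => ?_) (by simp)] at hrow_i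
  rw [(mul_eq_zero_iff_right hik).mp (mul_eq_zero_of_transpose_mul_self_eq_one hU h hlk i),
    zero_mul]

theorem eq_normalizedIndicator_colSupport [DecidableEq ι] [DecidableEq κ]
    (hU : ∀ i k, 0 ≤ U i k) (h : Uᵀ * U = 1) (hrow : (U * Uᵀ) *ᵥ 1 = 1) :
    U = normalizedIndicator (colSupport U) := by
  ext i k
  by_cases hik : U i k = 0
  · simp [normalizedIndicator, mem_colSupport, hik]
  set s := ∑ j, U j k
  have hval : ∀ j ∈ colSupport U k, U j k = s⁻¹ := fun j hj =>
    eq_inv_of_mul_eq_one_left (mul_colSum_eq_one hU h hrow (mem_colSupport.mp hj))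
  have hs_pos : 0 < s :=
    (lt_of_le_of_ne (hU i k) (Ne.symm hik)).trans_le
      (single_le_sum (fun j _ => hU j k) (mem_univ i))
  have hs : s = #(colSupport U k) * s⁻¹ := calc
    s = ∑ j ∈ colSupport U k, U j k := (sum_filter_ne_zero _).symm
    _ = ∑ j ∈ colSupport U k, s⁻¹ := sum_congr rfl hval
    _ = #(colSupport U k) * s⁻¹ := by rw [sum_const, nsmul_eq_mul]
  have hsqrt : √(#(colSupport U k) : ℝ) = s := by
    rw [← Real.sqrt_mul_self hs_pos.le]
    congr 1
    field_simp at hs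
    linarith
  simp [normalizedIndicator, mem_colSupport.mpr hik, hsqrt, hval i (mem_colSupport.mpr hik)]

end Forward

theorem stmt_8_general (n K : ℕ) :
    (∀ U : Matrix (Fin n) (Fin K) ℝ,
      (∀ i j, 0 ≤ U i j) →
      (U * Uᵀ).mulVec (fun _ => (1 : ℝ)) = (fun _ => (1 : ℝ)) →
      Uᵀ * U = 1 →
      ∃ G : Fin K → Finset (Fin n),
        (∀ k l, k ≠ l → Disjoint (G k) (G l)) ∧
        (∀ i : Fin n, ∃ k, i ∈ G k) ∧
        (∀ k, (G k).Nonempty) ∧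
        (∀ i k, U i k = if i ∈ G k then (Real.sqrt ((G k).card : ℝ))⁻¹ else 0)) ∧
    (∀ G : Fin K → Finset (Fin n),
      (∀ k l, k ≠ l → Disjoint (G k) (G l)) →
      (∀ i : Fin n, ∃ k, i ∈ G k) →
      (∀ k, (G k).Nonempty) →
      ∀ U : Matrix (Fin n) (Fin K) ℝ,
        (U = fun i k => if i ∈ G k then (Real.sqrt ((G k).card : ℝ))⁻¹ else 0) →
        (∀ i j, 0 ≤ U i j) ∧
        (U * Uᵀ).mulVec (fun _ => (1 : ℝ)) = (fun _ => (1 : ℝ)) ∧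
        Uᵀ * U = 1) := by
  refine ⟨fun U hU hrow h => ?_, fun G hdisj hcover hne U hUG => ?_⟩
  · exact ⟨colSupport U, fun k l => disjoint_colSupport hU h, exists_mem_colSupport hrow,
      colSupport_nonempty h, congrFun₂ (eq_normalizedIndicator_colSupport hU h hrow)⟩
  · subst hUG
    exact ⟨normalizedIndicator_nonneg G, normalizedIndicator_mul_transpose_mulVec_one hdisj hcover,
      transpose_normalizedIndicator_mul_self hdisj hne⟩

/-- Nonnegative `U` with `UUᵀ1 = 1` and `UᵀU = I` are exactly the normalized group
assignment matrices of partitions of `[n]` into `K` nonempty groups. -/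
theorem stmt_8 (n K : ℕ) (hK : 1 ≤ K) (hn : K ≤ n) :
    (∀ U : Matrix (Fin n) (Fin K) ℝ,
      (∀ i j, 0 ≤ U i j) →
      (U * Uᵀ).mulVec (fun _ => (1 : ℝ)) = (fun _ => (1 : ℝ)) →
      Uᵀ * U = 1 →
      ∃ G : Fin K → Finset (Fin n),
        (∀ k l, k ≠ l → Disjoint (G k) (G l)) ∧
        (∀ i : Fin n, ∃ k, i ∈ G k) ∧
        (∀ k, (G k).Nonempty) ∧
        (∀ i k, U i k = if i ∈ G k then (Real.sqrt ((G k).card : ℝ))⁻¹ else 0)) ∧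
    (∀ G : Fin K → Finset (Fin n),
      (∀ k l, k ≠ l → Disjoint (G k) (G l)) →
      (∀ i : Fin n, ∃ k, i ∈ G k) →
      (∀ k, (G k).Nonempty) →
      ∀ U : Matrix (Fin n) (Fin K) ℝ,
        (U = fun i k => if i ∈ G k then (Real.sqrt ((G k).card : ℝ))⁻¹ else 0) →
        (∀ i j, 0 ≤ U i j) ∧
        (U * Uᵀ).mulVec (fun _ => (1 : ℝ)) = (fun _ => (1 : ℝ)) ∧
        Uᵀ * U = 1) :=
  stmt_8_general n K
end

section
/- Let U ∈ R^{n×K} be a group assignment matrix, i.e., U has columns |G_k|^{-1/2} 1_{G_k} for a partition G_1 ⊔ ⋯ ⊔ G_K = [n] with all G_k nonempty, and let T_U M = {V ∈ R^{n×K} : (U V^T + V U^T) 1_n = 0, ⟨U, V⟩ = 0} and C_U = {V ∈ R^{n×K} : V_{ij} ≥ 0 whenever U_{ij} = 0}. Then T_U M ∩ C_U = {0}. -/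
/-!
Write `U i k = w k` on the blocks `i ∈ G k` (and `0` off them), `c k = |G k| w k` for the column
sums of `U`, `s l = ∑ i, V i l` and `a l = ∑ i ∈ G l, V i l`. Row `i ∈ G l` of the first tangency
equation reads `w l s l + ∑ k, c k V i k = 0`; all terms with `k ≠ l` are nonnegative because `V`
lies in the cone, so `c l V i l ≤ - w l s l`. Summing over `G l` gives `a l + s l ≤ 0`, hence
`a l ≤ 0`, and then `∑ k, w k a k = ⟨U, V⟩ = 0` forces every `a l = 0`. Consequently the
nonnegative off-block entries of column `l` sum to `0` and vanish, so `s l = 0`; then the entries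
of the block are `≤ 0` and sum to `a l = 0`, so they vanish too.
-/

open Matrix Function

theorem eq_of_mem_of_pairwise_disjoint {ι κ : Type*} {G : κ → Finset ι}
    (hdisj : Pairwise (Disjoint on G)) {i : ι} {k l : κ} (hk : i ∈ G k) (hl : i ∈ G l) :
    k = l := by
  by_contra h
  exact Finset.disjoint_left.mp (hdisj h) hk hl

variable {ι κ : Type*} [DecidableEq ι]

def groupMatrix (G : κ → Finset ι) (w : κ → ℝ) : Matrix ι κ ℝ :=
  fun i k => if i ∈ G k then w k else 0

namespace groupMatrix

variable {G : κ → Finset ι} {w : κ → ℝ}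

theorem transpose_mulVec_one [Fintype ι] (k : κ) :
    ((groupMatrix G w)ᵀ *ᵥ 1) k = (G k).card * w k := by
  simp [mulVec, dotProduct, groupMatrix, Finset.sum_ite_mem]

theorem mulVec_apply_of_mem [Fintype κ] (hdisj : Pairwise (Disjoint on G)) (x : κ → ℝ)
    {i : ι} {l : κ} (hi : i ∈ G l) : (groupMatrix G w *ᵥ x) i = w l * x l := by
  rw [mulVec, dotProduct, Finset.sum_eq_single l]
  · simp [groupMatrix, hi]
  · intro k _ hkl
    have hik : i ∉ G k := fun hk => hkl (eq_of_mem_of_pairwise_disjoint hdisj hk hi)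
    simp [groupMatrix, hik]
  · simp

variable [Fintype ι] [Fintype κ]

theorem trace_transpose_mul (V : Matrix ι κ ℝ) :
    ((groupMatrix G w)ᵀ * V).trace = ∑ k, w k * ∑ i ∈ G k, V i k := by
  simp [trace, mul_apply, groupMatrix, Finset.sum_ite_mem, Finset.mul_sum]

variable {V : Matrix ι κ ℝ}

theorem row_eq_zero (hdisj : Pairwise (Disjoint on G))
    (htan : (groupMatrix G w * Vᵀ + V * (groupMatrix G w)ᵀ) *ᵥ 1 = 0) {i : ι} {l : κ}
    (hi : i ∈ G l) : w l * ∑ j, V j l + ∑ k, V i k * ((G k).card * w k) = 0 := by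
  have h := congrFun htan i
  rw [add_mulVec, ← mulVec_mulVec, ← mulVec_mulVec, Pi.add_apply,
    mulVec_apply_of_mem hdisj _ hi, show (groupMatrix G w)ᵀ *ᵥ 1 = _ from
      funext transpose_mulVec_one] at h
  simpa [mulVec, dotProduct] using h

theorem apply_mul_le_of_mem (hdisj : Pairwise (Disjoint on G)) (hw : ∀ k, 0 < w k)
    (htan : (groupMatrix G w * Vᵀ + V * (groupMatrix G w)ᵀ) *ᵥ 1 = 0)
    (hcone : ∀ i k, i ∉ G k → 0 ≤ V i k) {i : ι} {l : κ} (hi : i ∈ G l) :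
    V i l * ((G l).card * w l) ≤ -(w l * ∑ j, V j l) := by
  classical
  have hoff : 0 ≤ ∑ k ∈ Finset.univ.erase l, V i k * ((G k).card * w k) :=
    Finset.sum_nonneg fun k hk => mul_nonneg
      (hcone i k fun h => (Finset.mem_erase.mp hk).1 (eq_of_mem_of_pairwise_disjoint hdisj h hi))
      (by positivity [(hw k).le])
  have := row_eq_zero hdisj htan hi
  rw [← Finset.add_sum_erase _ _ (Finset.mem_univ l)] at this
  linarith

theorem blockSum_add_sum_nonpos (hdisj : Pairwise (Disjoint on G)) (hw : ∀ k, 0 < w k)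
    (hne : ∀ k, (G k).Nonempty)
    (htan : (groupMatrix G w * Vᵀ + V * (groupMatrix G w)ᵀ) *ᵥ 1 = 0)
    (hcone : ∀ i k, i ∉ G k → 0 ≤ V i k) (l : κ) :
    ∑ i ∈ G l, V i l + ∑ i, V i l ≤ 0 := by
  have hc : 0 < ((G l).card : ℝ) * w l := mul_pos (Nat.cast_pos.mpr (hne l).card_pos) (hw l)
  have h := Finset.sum_le_sum fun i hi => apply_mul_le_of_mem hdisj hw htan hcone (l := l) (i := i) hi
  rw [← Finset.sum_mul, Finset.sum_const, nsmul_eq_mul] at h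
  have : (∑ i ∈ G l, V i l + ∑ i, V i l) * ((G l).card * w l) ≤ 0 := by linarith
  exact nonpos_of_mul_nonpos_left this hc

theorem eq_zero_of_mem_tangent_of_mem_cone (hdisj : Pairwise (Disjoint on G))
    (hw : ∀ k, 0 < w k) (hne : ∀ k, (G k).Nonempty)
    (htan1 : (groupMatrix G w * Vᵀ + V * (groupMatrix G w)ᵀ) *ᵥ 1 = 0)
    (htan2 : ((groupMatrix G w)ᵀ * V).trace = 0) (hcone : ∀ i k, i ∉ G k → 0 ≤ V i k) :
    V = 0 := by
  classical
  have hbound := blockSum_add_sum_nonpos hdisj hw hne htan1 hcone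
  have hsplit l : ∑ i, V i l = ∑ i ∈ G l, V i l + ∑ i ∈ (G l)ᶜ, V i l :=
    (Finset.sum_add_sum_compl _ _).symm
  have hoff_nonneg l : 0 ≤ ∑ i ∈ (G l)ᶜ, V i l :=
    Finset.sum_nonneg fun i hi => hcone i l (Finset.mem_compl.mp hi)
  have hblock l : ∑ i ∈ G l, V i l = 0 := by
    have hnonpos k : w k * ∑ i ∈ G k, V i k ≤ 0 :=
      mul_nonpos_of_nonneg_of_nonpos (hw k).le (by linarith [hbound k, hsplit k, hoff_nonneg k])
    rw [trace_transpose_mul] at htan2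
    have := (Finset.sum_eq_zero_iff_of_nonpos fun k _ => hnonpos k).mp htan2 l (Finset.mem_univ l)
    exact (mul_eq_zero.mp this).resolve_left (hw l).ne'
  have hoff i k (hik : i ∉ G k) : V i k = 0 := by
    have : ∑ i ∈ (G k)ᶜ, V i k = 0 := by linarith [hbound k, hsplit k, hoff_nonneg k, hblock k]
    exact (Finset.sum_eq_zero_iff_of_nonneg fun j hj => hcone j k (Finset.mem_compl.mp hj)).mp
      this i (Finset.mem_compl.mpr hik)
  have hcol k : ∑ i, V i k = 0 := by linarith [hsplit k, hoff_nonneg k, hblock k, hbound k]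
  ext i k
  by_cases hik : i ∈ G k
  · have hnonpos j (hj : j ∈ G k) : V j k ≤ 0 := by
      have := apply_mul_le_of_mem hdisj hw htan1 hcone hj
      rw [hcol, mul_zero, neg_zero] at this
      exact nonpos_of_mul_nonpos_left this (mul_pos (Nat.cast_pos.mpr (hne k).card_pos) (hw k))
    exact (Finset.sum_eq_zero_iff_of_nonpos hnonpos).mp (hblock k) i hik
  · exact hoff i k hik

end groupMatrix

theorem stmt_11_general (n K : ℕ)
    (G : Fin K → Finset (Fin n))
    (hdisj : ∀ k l, k ≠ l → Disjoint (G k) (G l))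
    (hne : ∀ k, (G k).Nonempty)
    (U : Matrix (Fin n) (Fin K) ℝ)
    (hU : U = fun i k => if i ∈ G k then (Real.sqrt ((G k).card : ℝ))⁻¹ else 0)
    (V : Matrix (Fin n) (Fin K) ℝ)
    (htan1 : (U * Vᵀ + V * Uᵀ).mulVec (fun _ => (1 : ℝ)) = 0)
    (htan2 : (Uᵀ * V).trace = 0)
    (hcone : ∀ i k, U i k = 0 → 0 ≤ V i k) :
    V = 0 := by
  have hw k : 0 < (Real.sqrt ((G k).card : ℝ))⁻¹ := by
    have := (hne k).card_pos
    positivity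
  subst hU
  exact groupMatrix.eq_zero_of_mem_tangent_of_mem_cone (G := G) hdisj hw hne
    htan1 htan2 fun i k hik => hcone i k (if_neg hik)

/-- At a group assignment matrix `U`, the tangent space of the K-means manifold
intersects the cone `C_U = {V : V_{ij} ≥ 0 whenever U_{ij} = 0}` trivially. -/
theorem stmt_11 (n K : ℕ) (hK : 2 ≤ K) (hn : K ≤ n)
    (G : Fin K → Finset (Fin n))
    (hdisj : ∀ k l, k ≠ l → Disjoint (G k) (G l))
    (hcover : ∀ i : Fin n, ∃ k, i ∈ G k)
    (hne : ∀ k, (G k).Nonempty)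
    (U : Matrix (Fin n) (Fin K) ℝ)
    (hU : U = fun i k => if i ∈ G k then (Real.sqrt ((G k).card : ℝ))⁻¹ else 0)
    (V : Matrix (Fin n) (Fin K) ℝ)
    (htan1 : (U * Vᵀ + V * Uᵀ).mulVec (fun _ => (1 : ℝ)) = 0)
    (htan2 : (Uᵀ * V).trace = 0)
    (hcone : ∀ i k, U i k = 0 → 0 ≤ V i k) :
    V = 0 :=
  stmt_11_general n K G hdisj hne U hU V htan1 htan2 hcone
end

section
/- Let Z ∈ R^{n×n} be the symmetric block-diagonal membership matrix of a partition G_1 ⊔ ⋯ ⊔ G_K = [n] into nonempty sets, defined by Z_{ij} = 1/|G_k| if i, j ∈ G_k for some k, and Z_{ij} = 0 otherwise. Then there exists a unique (up to permutation of columns) entrywise-nonnegative U ∈ R_+^{n×K} such that Z = U U^T, namely the group assignment matrix with columns |G_k|^{-1/2} 1_{G_k}. -/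
/-!
Write `u_i` for the rows of a nonnegative `U` with `UUᵀ = Z`. Rows from the same group `G_k`
satisfy `⟪u_i, u_j⟫ = ‖u_i‖² = ‖u_j‖² = 1/|G_k|`, hence coincide; rows from different groups are
orthogonal, and being nonnegative they have disjoint supports. So the `K` group rows are nonzero
vectors of `ℝ^K` with pairwise disjoint supports: each support is a single coordinate, and these
coordinates form a permutation of `[K]`. The norm condition then fixes the nonzero entry to
`|G_k|^{-1/2}`.
-/

open Matrix Function

theorem Matrix.dotProduct_self_eq_of_support_subset {m R : Type*} [Fintype m]
    [NonUnitalNonAssocSemiring R] {x : m → R} {k : m} (h : support x ⊆ {k}) :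
    x ⬝ᵥ x = x k * x k :=
  Finset.sum_eq_single k (fun i _ hik => by rw [notMem_support.mp fun hi => hik (h hi), zero_mul])
    (by simp)

theorem Matrix.dotProduct_row_eq_of_mul_transpose_eq {m n R : Type*} [Fintype n] [CommSemiring R]
    {A : Matrix m n R} {M : Matrix m m R} (h : A * Aᵀ = M) (i j : m) : A i ⬝ᵥ A j = M i j :=
  congrFun₂ h i j

section DotProduct

variable {m R : Type*} [Fintype m] [CommRing R] [LinearOrder R] [IsStrictOrderedRing R]

theorem Matrix.eq_of_dotProduct_self_eq_dotProduct {x y : m → R}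
    (hx : x ⬝ᵥ x = x ⬝ᵥ y) (hy : y ⬝ᵥ y = x ⬝ᵥ y) : x = y := by
  have h : (x - y) ⬝ᵥ (x - y) = 0 := by
    simp only [sub_dotProduct, dotProduct_sub, dotProduct_comm y x, hx, hy, sub_self]
  exact sub_eq_zero.mp (dotProduct_self_eq_zero.mp h)

theorem Matrix.disjoint_support_of_dotProduct_eq_zero {x y : m → R} (hx : 0 ≤ x) (hy : 0 ≤ y)
    (h : x ⬝ᵥ y = 0) : Disjoint (support x) (support y) := by
  have hxy := (Finset.sum_eq_zero_iff_of_nonneg fun k _ => mul_nonneg (hx k) (hy k)).mp h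
  exact Set.disjoint_left.mpr fun k hxk hyk => mul_ne_zero hxk hyk (hxy k (Finset.mem_univ k))

end DotProduct

theorem exists_perm_support_eq_singleton {ι M : Type*} [Finite ι] [Zero M] {v : ι → ι → M}
    (hv : ∀ b, v b ≠ 0) (hdisj : Pairwise (Disjoint on fun b => support (v b))) :
    ∃ σ : Equiv.Perm ι, ∀ b, support (v b) = {σ b} := by
  choose f hf using fun b => Function.ne_iff.mp (hv b)
  have hf_inj : f.Injective := fun b b' hbb' => by
    by_contra hne
    exact Set.disjoint_left.mp (hdisj hne) (hf b) (hbb' ▸ hf b')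
  have hf_bij := Finite.injective_iff_bijective.mp hf_inj
  refine ⟨Equiv.ofBijective f hf_bij, fun b => Set.eq_singleton_iff_unique_mem.mpr ⟨hf b, ?_⟩⟩
  intro k hk
  obtain ⟨b', rfl⟩ := hf_bij.2 k
  by_contra hne
  exact Set.disjoint_left.mp (hdisj fun h => hne (by subst h; rfl)) hk (hf b')

theorem Finset.mem_iff_eq_of_pairwise_disjoint {ι κ : Type*} {G : κ → Finset ι}
    (hdisj : Pairwise (Disjoint on G)) {i : ι} {k : κ} (hi : i ∈ G k) (l : κ) :
    i ∈ G l ↔ l = k :=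
  ⟨fun hl => by_contra fun hlk => Finset.disjoint_left.mp (hdisj hlk) hl hi, fun h => h ▸ hi⟩

section Partition

variable {ι κ : Type*} [DecidableEq ι]

noncomputable def assignmentMatrix (G : κ → Finset ι) : Matrix ι κ ℝ :=
  fun i k => if i ∈ G k then (Real.sqrt ((G k).card : ℝ))⁻¹ else 0

theorem assignmentMatrix_nonneg (G : κ → Finset ι) (i : ι) (k : κ) :
    0 ≤ assignmentMatrix G i k := by
  unfold assignmentMatrix
  split_ifs <;> positivity

variable [Fintype κ]

noncomputable def membershipMatrix (G : κ → Finset ι) : Matrix ι ι ℝ :=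
  fun i j => ∑ k, if i ∈ G k ∧ j ∈ G k then ((G k).card : ℝ)⁻¹ else 0

theorem membershipMatrix_apply_of_mem {G : κ → Finset ι} (hdisj : Pairwise (Disjoint on G))
    {i : ι} {k : κ} (hi : i ∈ G k) (j : ι) :
    membershipMatrix G i j = if j ∈ G k then ((G k).card : ℝ)⁻¹ else 0 := by
  rw [membershipMatrix, Finset.sum_eq_single k]
  · simp only [hi, true_and]
  · intro l _ hlk
    rw [if_neg]
    rintro ⟨hl, -⟩
    exact hlk ((Finset.mem_iff_eq_of_pairwise_disjoint hdisj hi l).mp hl)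
  · simp

theorem assignmentMatrix_mul_transpose (G : κ → Finset ι) :
    assignmentMatrix G * (assignmentMatrix G)ᵀ = membershipMatrix G := by
  ext i j
  refine Finset.sum_congr rfl fun k _ => ?_
  have hsq : (Real.sqrt (G k).card)⁻¹ * (Real.sqrt (G k).card)⁻¹ = ((G k).card : ℝ)⁻¹ := by
    rw [← mul_inv, Real.mul_self_sqrt (Nat.cast_nonneg _)]
  by_cases hi : i ∈ G k <;> by_cases hj : j ∈ G k <;> simp [assignmentMatrix, hi, hj, hsq]

end Partition

section Uniqueness

variable {ι κ : Type*} [DecidableEq ι] [Fintype κ] {G : κ → Finset ι} {U : Matrix ι κ ℝ}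

theorem dotProduct_self_row_of_mul_transpose (hdisj : Pairwise (Disjoint on G))
    (hUU : U * Uᵀ = membershipMatrix G) {i : ι} {k : κ} (hi : i ∈ G k) :
    U i ⬝ᵥ U i = ((G k).card : ℝ)⁻¹ := by
  rw [dotProduct_row_eq_of_mul_transpose_eq hUU, membershipMatrix_apply_of_mem hdisj hi, if_pos hi]

theorem row_eq_of_mul_transpose (hdisj : Pairwise (Disjoint on G))
    (hUU : U * Uᵀ = membershipMatrix G) {i j : ι} {k : κ} (hi : i ∈ G k) (hj : j ∈ G k) :
    U i = U j := by
  have hij : U i ⬝ᵥ U j = ((G k).card : ℝ)⁻¹ := by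
    rw [dotProduct_row_eq_of_mul_transpose_eq hUU, membershipMatrix_apply_of_mem hdisj hi, if_pos hj]
  exact eq_of_dotProduct_self_eq_dotProduct
    (by rw [hij, dotProduct_self_row_of_mul_transpose hdisj hUU hi])
    (by rw [hij, dotProduct_self_row_of_mul_transpose hdisj hUU hj])

theorem disjoint_support_row_of_mul_transpose (hdisj : Pairwise (Disjoint on G))
    (hU : ∀ i k, 0 ≤ U i k) (hUU : U * Uᵀ = membershipMatrix G) {i j : ι} {k l : κ}
    (hi : i ∈ G k) (hj : j ∈ G l) (hkl : k ≠ l) :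
    Disjoint (support (U i)) (support (U j)) := by
  refine disjoint_support_of_dotProduct_eq_zero (hU i) (hU j) ?_
  rw [dotProduct_row_eq_of_mul_transpose_eq hUU, membershipMatrix_apply_of_mem hdisj hi, if_neg]
  rw [Finset.mem_iff_eq_of_pairwise_disjoint hdisj hj]
  exact hkl

theorem exists_perm_eq_assignmentMatrix_of_mul_transpose (hdisj : Pairwise (Disjoint on G))
    (hcover : ∀ i, ∃ k, i ∈ G k) (hne : ∀ k, (G k).Nonempty) (hU : ∀ i k, 0 ≤ U i k)
    (hUU : U * Uᵀ = membershipMatrix G) :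
    ∃ σ : Equiv.Perm κ, ∀ i k, U i k = assignmentMatrix G i (σ k) := by
  choose r hr using hne
  have hnorm b := dotProduct_self_row_of_mul_transpose hdisj hUU (hr b)
  obtain ⟨σ, hσ⟩ := exists_perm_support_eq_singleton (v := fun b => U (r b))
    (fun b h => by simpa [h, Finset.card_ne_zero_of_mem (hr b), eq_comm] using hnorm b)
    (fun b b' hbb' => disjoint_support_row_of_mul_transpose hdisj hU hUU (hr b) (hr b') hbb')
  have hval b : U (r b) (σ b) = (Real.sqrt (G b).card)⁻¹ := by
    rw [← Real.sqrt_inv, ← hnorm b, dotProduct_self_eq_of_support_subset (hσ b).subset,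
      Real.sqrt_mul_self (hU _ _)]
  refine ⟨σ.symm, fun i k => ?_⟩
  obtain ⟨b, hb⟩ := hcover i
  have hrow := congrFun (row_eq_of_mul_transpose hdisj hUU hb (hr b)) k
  have hmem : i ∈ G (σ.symm k) ↔ σ b = k := by
    rw [Finset.mem_iff_eq_of_pairwise_disjoint hdisj hb, Equiv.symm_apply_eq, eq_comm]
  by_cases hk : σ b = k
  · subst hk
    rw [hrow, hval, assignmentMatrix, Equiv.symm_apply_apply, if_pos hb]
  · rw [hrow, assignmentMatrix, if_neg (hmem.not.mpr hk)]
    exact notMem_support.mp fun hmem => hk ((hσ b).subset hmem).symm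

end Uniqueness

theorem stmt_19_general (n K : ℕ)
    (G : Fin K → Finset (Fin n))
    (hdisj : ∀ k l, k ≠ l → Disjoint (G k) (G l))
    (hcover : ∀ i : Fin n, ∃ k, i ∈ G k)
    (hne : ∀ k, (G k).Nonempty)
    (Z : Matrix (Fin n) (Fin n) ℝ)
    (hZ : Z = fun i j => ∑ k, if i ∈ G k ∧ j ∈ G k then ((G k).card : ℝ)⁻¹ else 0)
    (U₀ : Matrix (Fin n) (Fin K) ℝ)
    (hU₀ : U₀ = fun i k => if i ∈ G k then (Real.sqrt ((G k).card : ℝ))⁻¹ else 0) :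
    ((∀ i k, 0 ≤ U₀ i k) ∧ Z = U₀ * U₀ᵀ) ∧
    (∀ U : Matrix (Fin n) (Fin K) ℝ,
      (∀ i k, 0 ≤ U i k) → Z = U * Uᵀ →
      ∃ σ : Equiv.Perm (Fin K), ∀ i k, U i k = U₀ i (σ k)) := by
  change Z = membershipMatrix G at hZ
  change U₀ = assignmentMatrix G at hU₀
  subst hZ hU₀
  exact ⟨⟨assignmentMatrix_nonneg G, (assignmentMatrix_mul_transpose G).symm⟩,
    fun U hU hUU => exists_perm_eq_assignmentMatrix_of_mul_transpose hdisj hcover hne hU hUU.symm⟩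

/-- The membership matrix `Z` of a partition factors as `Z = UUᵀ` for the nonnegative
group assignment matrix `U`, uniquely up to a permutation of columns. -/
theorem stmt_19 (n K : ℕ) (hK : 1 ≤ K) (hn : K ≤ n)
    (G : Fin K → Finset (Fin n))
    (hdisj : ∀ k l, k ≠ l → Disjoint (G k) (G l))
    (hcover : ∀ i : Fin n, ∃ k, i ∈ G k)
    (hne : ∀ k, (G k).Nonempty)
    (Z : Matrix (Fin n) (Fin n) ℝ)
    (hZ : Z = fun i j => ∑ k, if i ∈ G k ∧ j ∈ G k then ((G k).card : ℝ)⁻¹ else 0)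
    (U₀ : Matrix (Fin n) (Fin K) ℝ)
    (hU₀ : U₀ = fun i k => if i ∈ G k then (Real.sqrt ((G k).card : ℝ))⁻¹ else 0) :
    ((∀ i k, 0 ≤ U₀ i k) ∧ Z = U₀ * U₀ᵀ) ∧
    (∀ U : Matrix (Fin n) (Fin K) ℝ,
      (∀ i k, 0 ≤ U i k) → Z = U * Uᵀ →
      ∃ σ : Equiv.Perm (Fin K), ∀ i k, U i k = U₀ i (σ k)) :=
  stmt_19_general n K G hdisj hcover hne Z hZ U₀ hU₀
end
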